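/- arXiv:1407.4057 — 4 statements merged into one kernel-verified Lean document; each statement's English description precedes it below -/
import Mathlib

section
/- Let P and Q be rational polynomials of the same degree with positive leading coefficients r(P) and r(Q). Then P ⪯ Q (i.e., P(n)/P(m) ≤ Q(n)/Q(m) for m >> n >> 0) if and only if P(x)/r(P) ≤ Q(x)/r(Q) for all sufficiently large x. -/
/-!
Write `p`, `q` for the reduced polynomials; they have the same ratios `p(n)/p(m) = P(n)/P(m)`,
are eventually positive, and `p(m)/q(m) → 1`. For positive values, `p(n)/p(m) ≤ q(n)/q(m)`
says `p(n)/q(n) ≤ p(m)/q(m)`, so `P ⪯ Q` says that `f = p/q` is eventually below its own tail.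
Letting `m → ∞` gives `f(n) ≤ 1`, i.e. `p(n) ≤ q(n)`. Conversely, if `p ≤ q` eventually then
either `p = q`, or `p - q` has finitely many roots and `f(n) < 1 = lim f`, so `f(n) < f(m)`
for `m ≫ n`.
-/

open Filter Topology Polynomial

lemma eventually_atTop_eventually_atTop_iff {α : Type*} [SemilatticeSup α] [Nonempty α]
    {S : α → α → Prop} :
    (∃ N₀, ∀ n ≥ N₀, ∃ M ≥ n, ∀ m ≥ M, S n m) ↔ ∀ᶠ n in atTop, ∀ᶠ m in atTop, S n m := by
  simp only [eventually_atTop]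
  refine exists_congr fun N₀ => forall₂_congr fun n _ => ⟨fun ⟨M, _, hM⟩ => ⟨M, hM⟩, ?_⟩
  exact fun ⟨M, hM⟩ => ⟨M ⊔ n, le_sup_right, fun m hm => hM m (le_sup_left.trans hm)⟩

lemma div_le_div_iff_div_le_div {K : Type*} [Field K] [LinearOrder K] [IsStrictOrderedRing K]
    {a b c d : K} (hb : 0 < b) (hc : 0 < c) (hd : 0 < d) :
    a / b ≤ c / d ↔ a / c ≤ b / d := by
  rw [div_le_div_iff₀ hb hd, div_le_div_iff₀ hc hd, mul_comm b c]

namespace Polynomial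

section Field

variable {K : Type*} [Field K]

noncomputable def reduced (P : K[X]) : K[X] := C P.leadingCoeff⁻¹ * P

lemma eval_reduced (P : K[X]) (x : K) : P.reduced.eval x = P.eval x / P.leadingCoeff := by
  rw [reduced, eval_mul, eval_C, div_eq_inv_mul]

lemma monic_reduced {P : K[X]} (hP : P ≠ 0) : P.reduced.Monic :=
  monic_C_mul_of_mul_leadingCoeff_eq_one (inv_mul_cancel₀ (leadingCoeff_ne_zero.2 hP))

lemma degree_reduced {P : K[X]} (hP : P ≠ 0) : P.reduced.degree = P.degree :=
  degree_C_mul (inv_ne_zero (leadingCoeff_ne_zero.2 hP))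

end Field

section Asymptotics

variable {𝕜 : Type*} [NormedField 𝕜] [LinearOrder 𝕜] [IsStrictOrderedRing 𝕜]

lemma eventually_atTop_eval_ne {P Q : 𝕜[X]} (h : P ≠ Q) :
    ∀ᶠ x in atTop, P.eval x ≠ Q.eval x :=
  (eventually_atTop_not_isRoot (P - Q) (sub_ne_zero.2 h)).mono fun x hx =>
    sub_ne_zero.1 (by simpa using hx)

variable [OrderTopology 𝕜]

lemma eventually_atTop_eval_pos {P : 𝕜[X]} (hP : 0 < P.leadingCoeff) :
    ∀ᶠ x in atTop, 0 < P.eval x := by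
  rcases le_or_gt P.degree 0 with h | h
  · rw [eq_C_of_degree_le_zero h] at hP ⊢
    simp only [leadingCoeff_C, eval_C] at hP ⊢
    exact Eventually.of_forall fun _ => hP
  · exact (P.tendsto_atTop_of_leadingCoeff_nonneg h hP.le).eventually_gt_atTop 0

theorem Monic.eventually_eventually_div_le_div_iff [Archimedean 𝕜] {p q : 𝕜[X]}
    (hp : p.Monic) (hq : q.Monic) (hdeg : p.degree = q.degree) :
    (∀ᶠ n : ℕ in atTop, ∀ᶠ m : ℕ in atTop,
        p.eval (n : 𝕜) / p.eval (m : 𝕜) ≤ q.eval (n : 𝕜) / q.eval (m : 𝕜)) ↔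
      ∀ᶠ n : ℕ in atTop, p.eval (n : 𝕜) ≤ q.eval (n : 𝕜) := by
  set f : ℕ → 𝕜 := fun n => p.eval (n : 𝕜) / q.eval (n : 𝕜)
  have hf : Tendsto f atTop (𝓝 1) := by
    have := (div_tendsto_atTop_leadingCoeff_div_of_degree_eq p q hdeg).comp
      tendsto_natCast_atTop_atTop
    rwa [hp.leadingCoeff, hq.leadingCoeff, div_one] at this
  have hpos : ∀ᶠ n : ℕ in atTop, 0 < p.eval (n : 𝕜) ∧ 0 < q.eval (n : 𝕜) :=
    tendsto_natCast_atTop_atTop.eventually <|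
      (eventually_atTop_eval_pos (by simp [hp.leadingCoeff])).and
        (eventually_atTop_eval_pos (by simp [hq.leadingCoeff]))
  have hratio : ∀ᶠ n : ℕ in atTop,
      (∀ᶠ m : ℕ in atTop, p.eval (n : 𝕜) / p.eval (m : 𝕜) ≤ q.eval (n : 𝕜) / q.eval (m : 𝕜)) ↔
        ∀ᶠ m : ℕ in atTop, f n ≤ f m :=
    hpos.mono fun n hn => eventually_congr <|
      hpos.mono fun m hm => div_le_div_iff_div_le_div hm.1 hn.2 hm.2
  rw [eventually_congr hratio]
  constructor
  · intro h
    filter_upwards [h, hpos] with n hn hnpos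
    exact (div_le_one hnpos.2).1 (ge_of_tendsto hf hn)
  · intro h
    rcases eq_or_ne p q with rfl | hpq
    · filter_upwards [hpos] with n hn
      filter_upwards [hpos] with m hm
      simp only [f, div_self hn.1.ne', div_self hm.1.ne', le_refl]
    · filter_upwards [h, hpos, tendsto_natCast_atTop_atTop.eventually (eventually_atTop_eval_ne hpq)]
        with n hle hn hne
      have hlt : f n < 1 := (div_lt_one hn.2).2 (hle.lt_of_ne hne)
      exact (hf.eventually (lt_mem_nhds hlt)).mono fun _ => le_of_lt

end Asymptotics

end Polynomial

/-- For rational polynomials `P`, `Q` of the same degree with positive leading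
coefficients, `P ⪯ Q` in Rudakov's ordering (i.e. `P(n)/P(m) ≤ Q(n)/Q(m)` for
`m ≫ n ≫ 0`) iff the reduced polynomials satisfy `P/r(P) ≤ Q/r(Q)` eventually. -/
theorem stmt_1 (P Q : Polynomial ℚ) (hP : 0 < P.leadingCoeff) (hQ : 0 < Q.leadingCoeff)
    (hdeg : P.degree = Q.degree) :
    (∃ N₀ : ℕ, ∀ n ≥ N₀, ∃ M ≥ n, ∀ m ≥ M,
        P.eval (n : ℚ) / P.eval (m : ℚ) ≤ Q.eval (n : ℚ) / Q.eval (m : ℚ)) ↔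
    (∃ N : ℕ, ∀ x ≥ N, P.eval (x : ℚ) / P.leadingCoeff ≤ Q.eval (x : ℚ) / Q.leadingCoeff) := by
  have hP0 : P ≠ 0 := leadingCoeff_ne_zero.1 hP.ne'
  have hQ0 : Q ≠ 0 := leadingCoeff_ne_zero.1 hQ.ne'
  have key := (monic_reduced hP0).eventually_eventually_div_le_div_iff (monic_reduced hQ0)
    (by rw [degree_reduced hP0, degree_reduced hQ0, hdeg])
  simp only [eval_reduced, div_div_div_cancel_right₀ hP.ne',
    div_div_div_cancel_right₀ hQ.ne'] at key
  rw [eventually_atTop_eventually_atTop_iff, key, eventually_atTop]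
end

section
/- Let P(x) = p₁x + p₀ and Q(x) = q₁x + q₀ be polynomials of degree at most 1 with rational coefficients and p₁ > 0, q₁ > 0. Then P(n)/P(m) ≤ Q(n)/Q(m) holds for all m > n sufficiently large if and only if p₁q₀ − q₁p₀ ≥ 0. -/
/-!
Cross-multiplying, `P(x) Q(y) - Q(x) P(y) = (p₁q₀ - q₁p₀) (x - y)`. Since `P` and `Q` have
positive leading coefficients, `P(m)` and `Q(m)` are positive for all large `m`, and then for
`n < m` the inequality `P(n)/P(m) ≤ Q(n)/Q(m)` is equivalent to `p₁q₀ - q₁p₀ ≥ 0`.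
-/

open Filter

lemma linear_div_le_linear_div_iff {K : Type*} [Field K] [LinearOrder K] [IsStrictOrderedRing K]
    {p₁ p₀ q₁ q₀ x y : K} (hxy : x < y) (hP : 0 < p₁ * y + p₀) (hQ : 0 < q₁ * y + q₀) :
    (p₁ * x + p₀) / (p₁ * y + p₀) ≤ (q₁ * x + q₀) / (q₁ * y + q₀) ↔ 0 ≤ p₁ * q₀ - q₁ * p₀ := by
  have hcross : (p₁ * x + p₀) * (q₁ * y + q₀) - (q₁ * x + q₀) * (p₁ * y + p₀) =
      (p₁ * q₀ - q₁ * p₀) * (x - y) := by ring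
  rw [div_le_div_iff₀ hP hQ, ← sub_nonpos, hcross]
  exact ⟨fun h => nonneg_of_mul_nonpos_left h (sub_neg.2 hxy),
    fun h => mul_nonpos_of_nonneg_of_nonpos h (sub_neg.2 hxy).le⟩

lemma eventually_linear_pos {K : Type*} [Field K] [LinearOrder K] [IsStrictOrderedRing K]
    [Archimedean K] {a : K} (ha : 0 < a) (b : K) : ∀ᶠ n : ℕ in atTop, 0 < a * n + b :=
  (tendsto_atTop_add_const_right _ b
    (tendsto_natCast_atTop_atTop.const_mul_atTop ha)).eventually_gt_atTop 0

/-- For linear polynomials `P(x) = p₁x + p₀`, `Q(x) = q₁x + q₀` with positive leading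
coefficients, `P(n)/P(m) ≤ Q(n)/Q(m)` for all sufficiently large `m > n` iff
`p₁q₀ − q₁p₀ ≥ 0`. -/
theorem stmt_2 (p₁ p₀ q₁ q₀ : ℚ) (hp : 0 < p₁) (hq : 0 < q₁) :
    (∃ N : ℕ, ∀ n m : ℕ, N ≤ n → n < m →
        (p₁ * n + p₀) / (p₁ * m + p₀) ≤ (q₁ * n + q₀) / (q₁ * m + q₀)) ↔
    0 ≤ p₁ * q₀ - q₁ * p₀ := by
  obtain ⟨K, hK⟩ := eventually_atTop.1
    ((eventually_linear_pos hp p₀).and (eventually_linear_pos hq q₀))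
  constructor
  · rintro ⟨N, hN⟩
    have hpos := hK (max N K + 1) (by omega)
    exact (linear_div_le_linear_div_iff (by exact_mod_cast Nat.lt_succ_self _) hpos.1 hpos.2).1
      (hN _ _ (le_max_left N K) (Nat.lt_succ_self _))
  · intro hdet
    refine ⟨K, fun n m hn hnm => ?_⟩
    have hpos := hK m (by omega)
    exact (linear_div_le_linear_div_iff (by exact_mod_cast hnm) hpos.1 hpos.2).2 hdet
end

section
/- Let d ≥ 0, let P₀, …, P_d be positive reals, and let a₀, …, a_d and b₀, …, b_d be positive reals. Define θ_i := Σ_{j<i} P_j − Σ_{j>i} P_j and α_i := Σ_{j<i} P_j + Σ_{j>i} P_j, and set θ(a) = Σ_i θ_i a_i, α(a) = Σ_i α_i a_i (similarly for b). If a_j/a_i ≤ b_j/b_i for all j < i, then θ(a)/α(a) ≥ θ(b)/α(b). -/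
/-!
Write `A i = ∑_{j<i} P j` and `B i = ∑_{i<j≤d} P j`, so `θ i = A i - B i` and `α i = A i + B i`.
Cross-multiplying, the claim is `θ(b) α(a) ≤ θ(a) α(b)`, and the difference of the two sides is
the Lagrange-type double sum `∑_{i,k} (A i B k - A k B i) (a i b k - a k b i)`. Since `A` increases
and `B` decreases, the first factor is `≤ 0` for `i < k`; the hypothesis says the same of the
second factor, so every term is nonnegative.
-/

open Finset

theorem sum_sub_mul_sum_add_sub_eq_sum_sum {ι R : Type*} [CommRing R] (s : Finset ι)
    (A B a b : ι → R) :
    (∑ i ∈ s, (A i - B i) * a i) * (∑ i ∈ s, (A i + B i) * b i) -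
        (∑ i ∈ s, (A i - B i) * b i) * (∑ i ∈ s, (A i + B i) * a i) =
      ∑ i ∈ s, ∑ k ∈ s, (A i * B k - A k * B i) * (a i * b k - a k * b i) := by
  have expand : ∀ i k, (A i * B k - A k * B i) * (a i * b k - a k * b i) =
      A i * a i * (B k * b k) - A i * b i * (B k * a k) - B i * a i * (A k * b k)
        + B i * b i * (A k * a k) := fun i k => by ring
  simp only [expand, sum_add_distrib, sum_sub_distrib, ← mul_sum, ← sum_mul]
  simp only [sub_mul, add_mul, sum_add_distrib, sum_sub_distrib]
  ring

theorem sum_sub_mul_sum_add_le_of_cross_le {ι R : Type*} [LinearOrder ι] [CommRing R]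
    [LinearOrder R] [IsStrictOrderedRing R] {s : Finset ι} {A B a b : ι → R}
    (hAB : ∀ i ∈ s, ∀ k ∈ s, i < k → A i * B k ≤ A k * B i)
    (hab : ∀ i ∈ s, ∀ k ∈ s, i < k → a i * b k ≤ a k * b i) :
    (∑ i ∈ s, (A i - B i) * b i) * (∑ i ∈ s, (A i + B i) * a i) ≤
      (∑ i ∈ s, (A i - B i) * a i) * (∑ i ∈ s, (A i + B i) * b i) := by
  rw [← sub_nonneg, sum_sub_mul_sum_add_sub_eq_sum_sum]
  refine sum_nonneg fun i hi => sum_nonneg fun k hk => ?_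
  rcases lt_trichotomy i k with h | rfl | h
  · exact mul_nonneg_of_nonpos_of_nonpos (sub_nonpos.2 (hAB i hi k hk h))
      (sub_nonpos.2 (hab i hi k hk h))
  · simp
  · exact mul_nonneg (sub_nonneg.2 (hAB k hk i hi h)) (sub_nonneg.2 (hab k hk i hi h))

section PartialSums

variable {R : Type*} [CommRing R] [LinearOrder R] [IsStrictOrderedRing R] {d : ℕ} {P : ℕ → R}

theorem sum_range_mul_sum_Ioc_le (hP : ∀ j ≤ d, 0 ≤ P j) {i k : ℕ} (hik : i ≤ k) (hk : k ≤ d) :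
    (∑ j ∈ range i, P j) * ∑ j ∈ Ioc k d, P j ≤
      (∑ j ∈ range k, P j) * ∑ j ∈ Ioc i d, P j := by
  have hP_range : ∀ j ∈ range k, 0 ≤ P j := fun j hj => hP j (by grind)
  have hP_Ioc : ∀ j ∈ Ioc i d, 0 ≤ P j := fun j hj => hP j (mem_Ioc.1 hj).2
  exact mul_le_mul
    (sum_le_sum_of_subset_of_nonneg (range_subset_range.2 hik) fun j hj _ => hP_range j hj)
    (sum_le_sum_of_subset_of_nonneg (Ioc_subset_Ioc_left hik) fun j hj _ => hP_Ioc j hj)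
    (sum_nonneg fun j hj => hP_Ioc j (Ioc_subset_Ioc_left hik hj)) (sum_nonneg hP_range)

theorem sum_range_add_sum_Ioc_mul_pos (hd : 1 ≤ d) (hP : ∀ j ≤ d, 0 < P j) {c : ℕ → R}
    (hc : ∀ i ≤ d, 0 < c i) :
    0 < ∑ i ∈ range (d + 1), ((∑ j ∈ range i, P j) + ∑ j ∈ Ioc i d, P j) * c i := by
  have hP_range : ∀ i ≤ d, ∀ j ∈ range i, 0 ≤ P j := fun i hi j hj => (hP j (by grind)).le
  have hP_Ioc : ∀ i, ∀ j ∈ Ioc i d, 0 ≤ P j := fun i j hj => (hP j (mem_Ioc.1 hj).2).le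
  refine sum_pos' (fun i hi => ?_) ⟨0, by simp, ?_⟩
  · have hi : i ≤ d := Nat.lt_succ_iff.1 (mem_range.1 hi)
    exact mul_nonneg (add_nonneg (sum_nonneg (hP_range i hi)) (sum_nonneg (hP_Ioc i)))
      (hc i hi).le
  · rw [range_zero, sum_empty, zero_add]
    exact mul_pos (sum_pos (fun j hj => hP j (mem_Ioc.1 hj).2) (nonempty_Ioc.2 hd))
      (hc 0 d.zero_le)

end PartialSums

/-- Multi-vertex slope comparison: with `θ_i = Σ_{j<i} P_j − Σ_{j>i} P_j` and
`α_i = Σ_{j<i} P_j + Σ_{j>i} P_j`, if `a_j/a_i ≤ b_j/b_i` for all `j < i`, then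
`θ(a)/α(a) ≥ θ(b)/α(b)`. -/
theorem stmt_7 (d : ℕ) (hd : 1 ≤ d) (P a b : ℕ → ℝ)
    (hP : ∀ i ≤ d, 0 < P i) (ha : ∀ i ≤ d, 0 < a i) (hb : ∀ i ≤ d, 0 < b i)
    (hyp : ∀ j i : ℕ, j < i → i ≤ d → a j / a i ≤ b j / b i) :
    (∑ i ∈ Finset.range (d + 1),
        ((∑ j ∈ Finset.range i, P j) - ∑ j ∈ Finset.Ioc i d, P j) * a i) /
      (∑ i ∈ Finset.range (d + 1),
        ((∑ j ∈ Finset.range i, P j) + ∑ j ∈ Finset.Ioc i d, P j) * a i) ≥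
    (∑ i ∈ Finset.range (d + 1),
        ((∑ j ∈ Finset.range i, P j) - ∑ j ∈ Finset.Ioc i d, P j) * b i) /
      (∑ i ∈ Finset.range (d + 1),
        ((∑ j ∈ Finset.range i, P j) + ∑ j ∈ Finset.Ioc i d, P j) * b i) := by
  rw [ge_iff_le, div_le_div_iff₀ (sum_range_add_sum_Ioc_mul_pos hd hP hb)
    (sum_range_add_sum_Ioc_mul_pos hd hP ha)]
  refine sum_sub_mul_sum_add_le_of_cross_le (fun i _ k hk hik => ?_) (fun i _ k hk hik => ?_)
  all_goals have hk : k ≤ d := Nat.lt_succ_iff.1 (mem_range.1 hk)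
  · exact sum_range_mul_sum_Ioc_le (fun j hj => (hP j hj).le) hik.le hk
  · rw [mul_comm (a k)]
    exact (div_le_div_iff₀ (ha k hk) (hb k hk)).1 (hyp i k hik hk)
end

section
/- Every finite-dimensional representation W of a quiver Q over a field k admits a unique Harder–Narasimhan filtration with respect to (θ, α): a filtration 0 = W⁽⁰⁾ ⊂ W⁽¹⁾ ⊂ … ⊂ W⁽ˢ⁾ = W by subrepresentations such that each quotient W_i = W⁽ⁱ⁾/W⁽ⁱ⁻¹⁾ is (θ,α)-semistable and θ(W₁)/α(W₁) < θ(W₂)/α(W₂) < … < θ(W_s)/α(W_s). -/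
/-!
Fix a subrepresentation `U₀ ≠ W`. Among the subrepresentations `F ⊋ U₀` choose one for which the
slope of `F/U₀` is minimal and, among those, the dimension is maximal (only finitely many dimension
vectors occur). Modularity of dimension shows that the sum of two subrepresentations of minimal
slope again has minimal slope, so this `F` contains every subrepresentation of minimal slope: it is
the maximal destabilizing subrepresentation of `W/U₀`. Then `F/U₀` is semistable, every nonzero
subrepresentation of `W/F` has slope larger than that of `F/U₀`, and recursion on `W/F` produces
the Harder–Narasimhan filtration. Conversely, an induction along any Harder–Narasimhan filtration
shows that its first step is the maximal destabilizing subrepresentation, which gives uniqueness.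

Slope comparisons are made linear throughout: for `U' < U`, `μ ≤ slope (U/U')` holds iff the
dimension weighted by `θ - μ α` does not decrease from `U'` to `U`.
-/

open Module

/-- `U` is a subrepresentation of the representation `(W, φ)` of the quiver with
arrows `A`, source map `s` and target map `t`. -/
def IsSubrep {k V A : Type} [Field k] (s t : A → V) {W : V → Type}
    [∀ v, AddCommGroup (W v)] [∀ v, Module k (W v)]
    (φ : ∀ a : A, W (s a) →ₗ[k] W (t a)) (U : ∀ v, Submodule k (W v)) : Prop :=
  ∀ a : A, ∀ x ∈ U (s a), φ a x ∈ U (t a)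

/-- The slope `θ/α` of the subquotient `U/U'` (for `U' ≤ U`), computed from the
dimension vector `(dim U_v − dim U'_v)_v`. -/
noncomputable def subqSlope {k V : Type} [Field k] [Fintype V] (θ α : V → ℤ) {W : V → Type}
    [∀ v, AddCommGroup (W v)] [∀ v, Module k (W v)]
    (U' U : ∀ v, Submodule k (W v)) : ℚ :=
  (∑ v, (θ v : ℚ) * ((finrank k (U v) : ℚ) - (finrank k (U' v) : ℚ))) /
    (∑ v, (α v : ℚ) * ((finrank k (U v) : ℚ) - (finrank k (U' v) : ℚ)))

/-- The subquotient `U/U'` is `(θ,α)`-semistable: every nonzero subrepresentation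
`T/U'` (with `U' ≤ T ≤ U` and `T` a subrepresentation) has slope at least that of
`U/U'`. -/
def QuotSemistable {k V A : Type} [Field k] [Fintype V] (s t : A → V) (θ α : V → ℤ)
    {W : V → Type} [∀ v, AddCommGroup (W v)] [∀ v, Module k (W v)]
    (φ : ∀ a : A, W (s a) →ₗ[k] W (t a)) (U' U : ∀ v, Submodule k (W v)) : Prop :=
  ∀ T : ∀ v, Submodule k (W v), IsSubrep s t φ T → (∀ v, U' v ≤ T v) →
    (∀ v, T v ≤ U v) → (∃ v, T v ≠ U' v) →
    subqSlope θ α U' T ≥ subqSlope θ α U' U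

instance Pi.wellFoundedGT {ι : Type*} [Finite ι] {β : ι → Type*} [∀ i, Preorder (β i)]
    [∀ i, WellFoundedGT (β i)] : WellFoundedGT (∀ i, β i) :=
  inferInstanceAs (WellFoundedLT (∀ i, (β i)ᵒᵈ))

section Subrep

variable {k V A : Type} [Field k] {s t : A → V} {W : V → Type} [∀ v, AddCommGroup (W v)]
  [∀ v, Module k (W v)] {φ : ∀ a : A, W (s a) →ₗ[k] W (t a)} {T F : ∀ v, Submodule k (W v)}

lemma isSubrep_bot : IsSubrep s t φ ⊥ := by
  intro a x hx
  rw [(Submodule.mem_bot k).1 hx, map_zero]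
  exact zero_mem _

lemma isSubrep_top : IsSubrep s t φ ⊤ :=
  fun _ _ _ => Submodule.mem_top

lemma IsSubrep.inf (hT : IsSubrep s t φ T) (hF : IsSubrep s t φ F) : IsSubrep s t φ (T ⊓ F) :=
  fun a x hx => ⟨hT a x hx.1, hF a x hx.2⟩

lemma IsSubrep.sup (hT : IsSubrep s t φ T) (hF : IsSubrep s t φ F) : IsSubrep s t φ (T ⊔ F) := by
  intro a x hx
  obtain ⟨y, hy, z, hz, rfl⟩ := Submodule.mem_sup.1 hx
  rw [map_add]
  exact add_mem (Submodule.mem_sup_left (hT a y hy)) (Submodule.mem_sup_right (hF a z hz))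

end Subrep

section WeightedFinrank

variable {k V : Type} [Field k] [Fintype V] {W : V → Type} [∀ v, AddCommGroup (W v)]
  [∀ v, Module k (W v)]

noncomputable def weightedFinrank (c : V → ℚ) (U : ∀ v, Submodule k (W v)) : ℚ :=
  ∑ v, c v * finrank k (U v)

def shiftedWeight (θ α : V → ℤ) (μ : ℚ) : V → ℚ :=
  fun v => θ v - μ * α v

lemma weightedFinrank_shiftedWeight (θ α : V → ℤ) (μ : ℚ) (U : ∀ v, Submodule k (W v)) :
    weightedFinrank (shiftedWeight θ α μ) U =
      weightedFinrank (fun v => (θ v : ℚ)) U - μ * weightedFinrank (fun v => (α v : ℚ)) U := by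
  simp only [weightedFinrank, shiftedWeight, sub_mul, Finset.sum_sub_distrib, Finset.mul_sum,
    mul_assoc]

lemma subqSlope_eq (θ α : V → ℤ) (U' U : ∀ v, Submodule k (W v)) :
    subqSlope θ α U' U =
      (weightedFinrank (fun v => (θ v : ℚ)) U - weightedFinrank (fun v => (θ v : ℚ)) U') /
        (weightedFinrank (fun v => (α v : ℚ)) U - weightedFinrank (fun v => (α v : ℚ)) U') := by
  simp only [subqSlope, weightedFinrank, mul_sub, Finset.sum_sub_distrib]

lemma finite_range_finrank [∀ v, FiniteDimensional k (W v)] :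
    (Set.range fun U : ∀ v, Submodule k (W v) => fun v => finrank k (U v)).Finite := by
  refine (Set.Finite.pi fun v => Set.finite_Iic (finrank k (W v))).subset ?_
  rintro _ ⟨U, rfl⟩ v -
  exact Submodule.finrank_le (U v)

variable [∀ v, FiniteDimensional k (W v)] {U U' : ∀ v, Submodule k (W v)}

lemma weightedFinrank_strictMono {c : V → ℚ} (hc : ∀ v, 0 < c v) :
    StrictMono (weightedFinrank (k := k) (W := W) c) := by
  intro U' U h
  obtain ⟨hle, v, hv⟩ := Pi.lt_def.1 h
  refine Finset.sum_lt_sum (fun v _ => ?_) ⟨v, Finset.mem_univ v, ?_⟩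
  · exact mul_le_mul_of_nonneg_left (by exact_mod_cast Submodule.finrank_mono (hle v)) (hc v).le
  · exact mul_lt_mul_of_pos_left (by exact_mod_cast Submodule.finrank_lt_finrank_of_lt hv) (hc v)

lemma weightedFinrank_sup_add_inf (c : V → ℚ) (T F : ∀ v, Submodule k (W v)) :
    weightedFinrank c (T ⊔ F) + weightedFinrank c (T ⊓ F) =
      weightedFinrank c T + weightedFinrank c F := by
  simp only [weightedFinrank, ← Finset.sum_add_distrib]
  refine Finset.sum_congr rfl fun v _ => ?_
  have h := Submodule.finrank_sup_add_finrank_inf_eq (T v) (F v)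
  qify at h
  rw [Pi.sup_apply, Pi.inf_apply]
  linear_combination c v * h

variable {θ α : V → ℤ} {μ : ℚ}

lemma le_subqSlope_iff (hα : ∀ v, 0 < α v) (h : U' < U) :
    μ ≤ subqSlope θ α U' U ↔
      weightedFinrank (shiftedWeight θ α μ) U' ≤ weightedFinrank (shiftedWeight θ α μ) U := by
  have hden := sub_pos.2 (weightedFinrank_strictMono (fun v => Int.cast_pos.2 (hα v)) h)
  rw [subqSlope_eq, le_div_iff₀ hden, weightedFinrank_shiftedWeight,
    weightedFinrank_shiftedWeight]
  constructor <;> intro <;> linarith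

lemma subqSlope_le_iff (hα : ∀ v, 0 < α v) (h : U' < U) :
    subqSlope θ α U' U ≤ μ ↔
      weightedFinrank (shiftedWeight θ α μ) U ≤ weightedFinrank (shiftedWeight θ α μ) U' := by
  have hden := sub_pos.2 (weightedFinrank_strictMono (fun v => Int.cast_pos.2 (hα v)) h)
  rw [subqSlope_eq, div_le_iff₀ hden, weightedFinrank_shiftedWeight,
    weightedFinrank_shiftedWeight]
  constructor <;> intro <;> linarith

lemma lt_subqSlope_iff (hα : ∀ v, 0 < α v) (h : U' < U) :
    μ < subqSlope θ α U' U ↔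
      weightedFinrank (shiftedWeight θ α μ) U' < weightedFinrank (shiftedWeight θ α μ) U := by
  rw [← not_le, subqSlope_le_iff hα h, not_le]

end WeightedFinrank

section HarderNarasimhan

variable {k V A : Type} [Field k] [Fintype V] (s t : A → V) {W : V → Type}
  [∀ v, AddCommGroup (W v)] [∀ v, Module k (W v)] (φ : ∀ a : A, W (s a) →ₗ[k] W (t a))
  (θ α : V → ℤ)

/-- A Harder–Narasimhan filtration of `W / U 0`. -/
structure IsHNFiltration (n : ℕ) (U : ℕ → ∀ v, Submodule k (W v)) : Prop where
  top : U n = ⊤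
  isSubrep : ∀ i ≤ n, IsSubrep s t φ (U i)
  lt_succ : ∀ i < n, U i < U (i + 1)
  semistable : ∀ i < n, QuotSemistable s t θ α φ (U i) (U (i + 1))
  slope_lt : ∀ i, i + 1 < n →
    subqSlope θ α (U i) (U (i + 1)) < subqSlope θ α (U (i + 1)) (U (i + 2))

structure IsMaxDestabilizing (U₀ F : ∀ v, Submodule k (W v)) : Prop where
  isSubrep : IsSubrep s t φ F
  lt : U₀ < F
  slope_le : ∀ T, IsSubrep s t φ T → U₀ < T → subqSlope θ α U₀ F ≤ subqSlope θ α U₀ T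
  le_of_slope_le : ∀ T, IsSubrep s t φ T → U₀ < T →
    subqSlope θ α U₀ T ≤ subqSlope θ α U₀ F → T ≤ F

variable {s t φ θ α} {n : ℕ} {U G : ℕ → ∀ v, Submodule k (W v)}
  {U₀ U' T F : ∀ v, Submodule k (W v)}

lemma quotSemistable_iff {U : ∀ v, Submodule k (W v)} :
    QuotSemistable s t θ α φ U' U ↔
      ∀ T, IsSubrep s t φ T → U' < T → T ≤ U → subqSlope θ α U' U ≤ subqSlope θ α U' T := by
  refine ⟨fun h T hT hU'T hTU => h T hT hU'T.le hTU (Function.ne_iff.1 hU'T.ne'),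
    fun h T hT hU'T hTU hne => h T hT ?_ hTU⟩
  exact lt_of_le_of_ne hU'T (Function.ne_iff.2 hne).symm

lemma isHNFiltration_iff :
    IsHNFiltration s t φ θ α n U ↔
      (U n = fun _ => ⊤) ∧ (∀ i ≤ n, IsSubrep s t φ (U i)) ∧
        (∀ i < n, ∀ v, U i v ≤ U (i + 1) v) ∧ (∀ i < n, ∃ v, U i v ≠ U (i + 1) v) ∧
        (∀ i < n, QuotSemistable s t θ α φ (U i) (U (i + 1))) ∧
        (∀ i, i + 1 < n → subqSlope θ α (U i) (U (i + 1)) <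
          subqSlope θ α (U (i + 1)) (U (i + 2))) := by
  refine ⟨fun hU => ⟨hU.top, hU.isSubrep, fun i hi => (hU.lt_succ i hi).le,
    fun i hi => Function.ne_iff.1 (hU.lt_succ i hi).ne, hU.semistable, hU.slope_lt⟩, ?_⟩
  rintro ⟨htop, hsub, hle, hne, hss, hsl⟩
  exact ⟨htop, hsub, fun i hi => lt_of_le_of_ne (hle i hi) (Function.ne_iff.2 (hne i hi)),
    hss, hsl⟩

lemma IsMaxDestabilizing.unique (hF : IsMaxDestabilizing s t φ θ α U₀ F)
    (hF' : IsMaxDestabilizing s t φ θ α U₀ F') : F = F' :=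
  le_antisymm (hF'.le_of_slope_le F hF.isSubrep hF.lt (hF.slope_le F' hF'.isSubrep hF'.lt))
    (hF.le_of_slope_le F' hF'.isSubrep hF'.lt (hF'.slope_le F hF.isSubrep hF.lt))

namespace IsHNFiltration

lemma length_eq_zero_iff (hU : IsHNFiltration s t φ θ α n U) : n = 0 ↔ U 0 = ⊤ := by
  refine ⟨fun h => h ▸ hU.top, fun h => ?_⟩
  by_contra hn
  exact not_top_lt (h ▸ hU.lt_succ 0 (Nat.pos_of_ne_zero hn))

lemma tail (hU : IsHNFiltration s t φ θ α (n + 1) U) :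
    IsHNFiltration s t φ θ α n fun i => U (i + 1) where
  top := hU.top
  isSubrep i hi := hU.isSubrep (i + 1) (by omega)
  lt_succ i hi := hU.lt_succ (i + 1) (by omega)
  semistable i hi := hU.semistable (i + 1) (by omega)
  slope_lt i hi := hU.slope_lt (i + 1) (by omega)

lemma zero_le (hU : IsHNFiltration s t φ θ α n U) {i : ℕ} (hi : i ≤ n) : U 0 ≤ U i := by
  induction i with
  | zero => exact le_rfl
  | succ i ih => exact (ih (by omega)).trans (hU.lt_succ i (by omega)).le

lemma subqSlope_zero_lt (hU : IsHNFiltration s t φ θ α n U) {j : ℕ} (hj : 1 ≤ j) :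
    j < n → subqSlope θ α (U 0) (U 1) < subqSlope θ α (U j) (U (j + 1)) := by
  induction j, hj using Nat.le_induction with
  | base => exact hU.slope_lt 0
  | succ j hj ih => exact fun h => (ih (by omega)).trans (hU.slope_lt j h)

end IsHNFiltration

variable [∀ v, FiniteDimensional k (W v)]

/-- In slope terms: `μ ≤ slope (T / U 0)`, strictly if `T ≰ U 1`; the linear form also makes sense
for `T = U 0`, which the induction passes through. -/
lemma IsHNFiltration.weightedFinrank_shiftedWeight_le (hα : ∀ v, 0 < α v)
    (hU : IsHNFiltration s t φ θ α n U) {μ : ℚ} (hμ : μ ≤ subqSlope θ α (U 0) (U 1)) {i : ℕ}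
    (hi : i < n) (hT : IsSubrep s t φ T) (h0T : U 0 ≤ T) (hTi : T ≤ U (i + 1)) :
    weightedFinrank (shiftedWeight θ α μ) (U 0) ≤ weightedFinrank (shiftedWeight θ α μ) T ∧
      (¬T ≤ U 1 → weightedFinrank (shiftedWeight θ α μ) (U 0) <
        weightedFinrank (shiftedWeight θ α μ) T) := by
  set e := weightedFinrank (k := k) (W := W) (shiftedWeight θ α μ)
  induction i generalizing T with
  | zero =>
    refine ⟨?_, fun h => absurd hTi h⟩
    rcases h0T.eq_or_lt with rfl | h0T
    · exact le_rfl
    · exact (le_subqSlope_iff hα h0T).1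
        (hμ.trans (quotSemistable_iff.1 (hU.semistable 0 hi) T hT h0T hTi))
  | succ i ih =>
    by_cases hTi' : T ≤ U (i + 1)
    · exact ih (by omega) hT h0T hTi'
    -- `T ⊔ U (i+1)` lies in the semistable layer above `U (i+1)`, whose slope exceeds `μ`
    have hinf := (ih (by omega) (hT.inf (hU.isSubrep (i + 1) (by omega)))
      (le_inf h0T (hU.zero_le (by omega))) inf_le_right).1
    have hlt : U (i + 1) < T ⊔ U (i + 1) := right_lt_sup.2 hTi'
    have hslope : μ < subqSlope θ α (U (i + 1)) (T ⊔ U (i + 1)) :=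
      (hμ.trans_lt (hU.subqSlope_zero_lt (by omega) hi)).trans_le
        (quotSemistable_iff.1 (hU.semistable (i + 1) hi) _
          (hT.sup (hU.isSubrep (i + 1) (by omega))) hlt (sup_le hTi (hU.lt_succ _ hi).le))
    have hsup := (lt_subqSlope_iff hα hlt).1 hslope
    have hmod := weightedFinrank_sup_add_inf (shiftedWeight θ α μ) T (U (i + 1))
    have hstrict : e (U 0) < e T := by linarith
    exact ⟨hstrict.le, fun _ => hstrict⟩

lemma IsHNFiltration.isMaxDestabilizing (hα : ∀ v, 0 < α v) (hU : IsHNFiltration s t φ θ α n U)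
    (hn : 0 < n) : IsMaxDestabilizing s t φ θ α (U 0) (U 1) := by
  have hle : ∀ T, IsSubrep s t φ T → U 0 ≤ T → _ := fun T hT h0T =>
    hU.weightedFinrank_shiftedWeight_le hα le_rfl (Nat.sub_one_lt_of_lt hn) hT h0T
      (by rw [Nat.sub_add_cancel hn, hU.top]; exact le_top)
  refine ⟨hU.isSubrep 1 hn, hU.lt_succ 0 hn, fun T hT h0T => ?_, fun T hT h0T hslope => ?_⟩
  · exact (le_subqSlope_iff hα h0T).2 (hle T hT h0T.le).1
  · by_contra hT1
    exact ((hle T hT h0T.le).2 hT1).not_ge ((subqSlope_le_iff hα h0T).1 hslope)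

lemma exists_subqSlope_min_finrank_max (hU₀ : U₀ < ⊤) :
    ∃ F, IsSubrep s t φ F ∧ U₀ < F ∧ ∀ T, IsSubrep s t φ T → U₀ < T →
      subqSlope θ α U₀ F ≤ subqSlope θ α U₀ T ∧
        (subqSlope θ α U₀ T ≤ subqSlope θ α U₀ F → weightedFinrank 1 T ≤ weightedFinrank 1 F) := by
  set S := {T | IsSubrep s t φ T ∧ U₀ < T}
  set f := fun T => toLex (subqSlope θ α U₀ T, -weightedFinrank 1 T)
  have hfin : (f '' S).Finite := by
    refine ((finite_range_finrank (k := k) (W := W)).image fun d : V → ℕ =>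
      toLex ((∑ v, (θ v : ℚ) * (d v - finrank k (U₀ v))) /
        ∑ v, (α v : ℚ) * (d v - finrank k (U₀ v)), -∑ v, (1 : V → ℚ) v * d v)).subset ?_
    rintro _ ⟨T, -, rfl⟩
    exact ⟨_, ⟨T, rfl⟩, rfl⟩
  obtain ⟨F, ⟨hF, hU₀F⟩, hmin⟩ := hfin.exists_minimalFor' f S ⟨⊤, isSubrep_top, hU₀⟩
  refine ⟨F, hF, hU₀F, fun T hT hU₀T => ?_⟩
  have hFT : f F ≤ f T := (le_total (f F) (f T)).elim id (hmin ⟨hT, hU₀T⟩)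
  rcases Prod.Lex.toLex_le_toLex.1 hFT with hlt | ⟨heq, hdim⟩
  · exact ⟨hlt.le, fun hle => absurd hle hlt.not_ge⟩
  · exact ⟨heq.le, fun _ => neg_le_neg_iff.1 hdim⟩

lemma subqSlope_sup_le (hα : ∀ v, 0 < α v) {μ : ℚ}
    (hmin : ∀ X, IsSubrep s t φ X → U₀ < X → μ ≤ subqSlope θ α U₀ X)
    (hT : IsSubrep s t φ T) (hF : IsSubrep s t φ F) (hU₀T : U₀ < T) (hU₀F : U₀ < F)
    (hTμ : subqSlope θ α U₀ T ≤ μ) (hFμ : subqSlope θ α U₀ F ≤ μ) :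
    subqSlope θ α U₀ (T ⊔ F) ≤ μ := by
  set e := weightedFinrank (k := k) (W := W) (shiftedWeight θ α μ)
  have hTe : e T ≤ e U₀ := (subqSlope_le_iff hα hU₀T).1 hTμ
  have hFe : e F ≤ e U₀ := (subqSlope_le_iff hα hU₀F).1 hFμ
  have hinf : e U₀ ≤ e (T ⊓ F) := by
    rcases (le_inf hU₀T.le hU₀F.le).eq_or_lt with h | h
    · rw [← h]
    · exact (le_subqSlope_iff hα h).1 (hmin _ (hT.inf hF) h)
  have hmod := weightedFinrank_sup_add_inf (shiftedWeight θ α μ) T F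
  rw [subqSlope_le_iff hα (hU₀T.trans_le le_sup_left)]
  linarith

lemma exists_isMaxDestabilizing (hα : ∀ v, 0 < α v) (hU₀ : U₀ < ⊤) :
    ∃ F, IsMaxDestabilizing s t φ θ α U₀ F := by
  obtain ⟨F, hF, hU₀F, hmin⟩ := exists_subqSlope_min_finrank_max (φ := φ) (θ := θ) (α := α) hU₀
  refine ⟨F, hF, hU₀F, fun T hT hU₀T => (hmin T hT hU₀T).1, fun T hT hU₀T hTF => ?_⟩
  have hsup : subqSlope θ α U₀ (T ⊔ F) ≤ subqSlope θ α U₀ F :=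
    subqSlope_sup_le hα (fun X hX hU₀X => (hmin X hX hU₀X).1) hT hF hU₀T hU₀F hTF le_rfl
  have hdim := (hmin _ (hT.sup hF) (hU₀T.trans_le le_sup_left)).2 hsup
  refine sup_eq_right.1 (le_sup_right.eq_of_not_lt fun hlt => hdim.not_gt ?_).symm
  exact weightedFinrank_strictMono (fun _ => one_pos) hlt

lemma IsMaxDestabilizing.subqSlope_lt (hα : ∀ v, 0 < α v) (hF : IsMaxDestabilizing s t φ θ α U₀ F)
    (hT : IsSubrep s t φ T) (hFT : F < T) : subqSlope θ α U₀ F < subqSlope θ α F T := by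
  by_contra! h
  have hU₀T := hF.lt.trans hFT
  have hTF := (subqSlope_le_iff hα hFT).1 h
  have hFU₀ := (subqSlope_le_iff (θ := θ) hα hF.lt).1 le_rfl
  exact hFT.not_ge <| hF.le_of_slope_le T hT hU₀T <|
    (subqSlope_le_iff hα hU₀T).2 (hTF.trans hFU₀)

lemma IsHNFiltration.cons (hα : ∀ v, 0 < α v) (hG : IsHNFiltration s t φ θ α n G)
    (hU₀ : IsSubrep s t φ U₀) (hF : IsMaxDestabilizing s t φ θ α U₀ (G 0)) :
    IsHNFiltration s t φ θ α (n + 1) fun | 0 => U₀ | i + 1 => G i where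
  top := hG.top
  isSubrep
    | 0, _ => hU₀
    | i + 1, hi => hG.isSubrep i (by omega)
  lt_succ
    | 0, _ => hF.lt
    | i + 1, hi => hG.lt_succ i (by omega)
  semistable
    | 0, _ => quotSemistable_iff.2 fun T hT hU₀T _ => hF.slope_le T hT hU₀T
    | i + 1, hi => hG.semistable i (by omega)
  slope_lt
    | 0, hi => hF.subqSlope_lt hα (hG.isSubrep 1 (by omega)) (hG.lt_succ 0 (by omega))
    | i + 1, hi => hG.slope_lt i (by omega)

theorem exists_isHNFiltration (hα : ∀ v, 0 < α v) (hU₀ : IsSubrep s t φ U₀) :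
    ∃ n U, U 0 = U₀ ∧ IsHNFiltration s t φ θ α n U := by
  induction U₀ using WellFoundedGT.induction with
  | _ U₀ ih =>
    rcases (le_top : U₀ ≤ ⊤).eq_or_lt with htop | hlt
    · exact ⟨0, fun _ => U₀, rfl, htop, fun _ _ => hU₀, by simp, by simp, by simp⟩
    · obtain ⟨F, hF⟩ := exists_isMaxDestabilizing hα hlt
      obtain ⟨n, G, rfl, hG⟩ := ih _ hF.lt hF.isSubrep
      exact ⟨n + 1, _, rfl, hG.cons hα hU₀ hF⟩

theorem IsHNFiltration.unique (hα : ∀ v, 0 < α v) {n' : ℕ} {U' : ℕ → ∀ v, Submodule k (W v)}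
    (hU : IsHNFiltration s t φ θ α n U) (hU' : IsHNFiltration s t φ θ α n' U') (h0 : U 0 = U' 0) :
    n = n' ∧ ∀ i ≤ n, U i = U' i := by
  induction n generalizing n' U U' with
  | zero =>
    have hn' : n' = 0 := hU'.length_eq_zero_iff.2 (h0 ▸ hU.top)
    exact ⟨hn'.symm, fun i hi => Nat.le_zero.1 hi ▸ h0⟩
  | succ n ih =>
    obtain ⟨m, rfl⟩ : ∃ m, n' = m + 1 := Nat.exists_eq_succ_of_ne_zero fun hn' =>
      n.succ_ne_zero (hU.length_eq_zero_iff.2 (h0.trans (hU'.length_eq_zero_iff.1 hn')))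
    have h1 : U 1 = U' 1 := (hU.isMaxDestabilizing hα n.succ_pos).unique
      (h0 ▸ hU'.isMaxDestabilizing hα m.succ_pos)
    obtain ⟨rfl, h⟩ := ih hU.tail hU'.tail h1
    exact ⟨rfl, fun | 0, _ => h0 | i + 1, hi => h i (by omega)⟩

end HarderNarasimhan

/-- Existence and uniqueness of the Harder–Narasimhan filtration of a
finite-dimensional quiver representation with respect to `(θ, α)`: a filtration
`0 = W⁽⁰⁾ ⊂ … ⊂ W⁽ⁿ⁾ = W` by subrepresentations whose subquotients are
`(θ,α)`-semistable with strictly increasing slopes. -/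
theorem stmt_17 {k V A : Type} [Field k] [Fintype V] (s t : A → V)
    (W : V → Type) [∀ v, AddCommGroup (W v)] [∀ v, Module k (W v)]
    [∀ v, FiniteDimensional k (W v)]
    (φ : ∀ a : A, W (s a) →ₗ[k] W (t a)) (θ α : V → ℤ) (hα : ∀ v, 0 < α v) :
    ∃ (n : ℕ) (U : ℕ → ∀ v, Submodule k (W v)),
      ((U 0 = fun _ => ⊥) ∧ (U n = fun _ => ⊤) ∧
        (∀ i ≤ n, IsSubrep s t φ (U i)) ∧
        (∀ i < n, ∀ v, U i v ≤ U (i + 1) v) ∧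
        (∀ i < n, ∃ v, U i v ≠ U (i + 1) v) ∧
        (∀ i < n, QuotSemistable s t θ α φ (U i) (U (i + 1))) ∧
        (∀ i, i + 1 < n → subqSlope θ α (U i) (U (i + 1)) <
          subqSlope θ α (U (i + 1)) (U (i + 2)))) ∧
      (∀ (n' : ℕ) (U' : ℕ → ∀ v, Submodule k (W v)),
        ((U' 0 = fun _ => ⊥) ∧ (U' n' = fun _ => ⊤) ∧
          (∀ i ≤ n', IsSubrep s t φ (U' i)) ∧
          (∀ i < n', ∀ v, U' i v ≤ U' (i + 1) v) ∧
          (∀ i < n', ∃ v, U' i v ≠ U' (i + 1) v) ∧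
          (∀ i < n', QuotSemistable s t θ α φ (U' i) (U' (i + 1))) ∧
          (∀ i, i + 1 < n' → subqSlope θ α (U' i) (U' (i + 1)) <
            subqSlope θ α (U' (i + 1)) (U' (i + 2)))) →
        n' = n ∧ ∀ i ≤ n, U' i = U i) := by
  obtain ⟨n, U, hU0, hU⟩ := exists_isHNFiltration (φ := φ) (θ := θ) hα isSubrep_bot
  refine ⟨n, U, ⟨hU0, isHNFiltration_iff.1 hU⟩, fun n' U' ⟨hU'0, hU'⟩ => ?_⟩
  obtain ⟨rfl, hU'U⟩ := (isHNFiltration_iff.2 hU').unique hα hU (hU'0.trans hU0.symm)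
  exact ⟨rfl, hU'U⟩
end
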